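/- arXiv:2103.04355 — 8 statements merged into one kernel-verified Lean document; each statement's English description precedes it below -/
import Mathlib

section
/- For any probability vector p = (p_1,...,p_N), the function G_β(p) = β · log(∑_{k=1}^N p_k^{1+1/β}) is convex in β on (0,∞). -/
/-!
Writing `F s = log ∑ p_k ^ (1 + s)`, we have `G_β(p) = β F(1/β)`, the perspective of `F` evaluated
at `1`. By Hölder's inequality `F` is convex, and the perspective of a convex function is convex.
-/

open Real Finset

theorem Real.sum_rpow_mul_rpow_le {ι : Type*} (s : Finset ι) {f g : ι → ℝ}
    (hf : ∀ i ∈ s, 0 ≤ f i) (hg : ∀ i ∈ s, 0 ≤ g i) {a b : ℝ} (ha : 0 < a) (hb : 0 < b)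
    (hab : a + b = 1) :
    ∑ i ∈ s, f i ^ a * g i ^ b ≤ (∑ i ∈ s, f i) ^ a * (∑ i ∈ s, g i) ^ b := by
  have holder := inner_le_Lp_mul_Lq_of_nonneg s (HolderConjugate.inv_inv ha hb hab)
    (fun i hi => rpow_nonneg (hf i hi) a) (fun i hi => rpow_nonneg (hg i hi) b)
  simp only [one_div, inv_inv] at holder
  rwa [sum_congr rfl fun i hi => rpow_rpow_inv (hf i hi) ha.ne',
    sum_congr rfl fun i hi => rpow_rpow_inv (hg i hi) hb.ne'] at holder

-- Not on all of `ℝ`: since `0 ^ 0 = 1`, vanishing `p i` make the sum jump at `t = 0`.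
theorem Real.convexOn_log_sum_rpow {ι : Type*} (s : Finset ι) {p : ι → ℝ}
    (hp : ∀ i ∈ s, 0 ≤ p i) :
    ConvexOn ℝ (Set.Ioi (0 : ℝ)) fun t : ℝ => log (∑ i ∈ s, p i ^ t) := by
  by_cases hzero : ∀ i ∈ s, p i = 0
  · refine (convexOn_const 0 (convex_Ioi 0)).congr fun t ht => ?_
    rw [sum_eq_zero fun i hi => by rw [hzero i hi, zero_rpow (ne_of_gt ht)], log_zero]
  push Not at hzero
  obtain ⟨j, hj, hpj⟩ := hzero
  have hsum_pos (t : ℝ) : 0 < ∑ i ∈ s, p i ^ t :=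
    sum_pos' (fun i hi => rpow_nonneg (hp i hi) t)
      ⟨j, hj, rpow_pos_of_pos ((hp j hj).lt_of_ne' hpj) t⟩
  refine convexOn_iff_forall_pos.mpr ⟨convex_Ioi 0, fun x hx y hy a b ha hb hab => ?_⟩
  simp only [Set.mem_Ioi] at hx hy
  have hsplit : ∑ i ∈ s, p i ^ (a • x + b • y) = ∑ i ∈ s, (p i ^ x) ^ a * (p i ^ y) ^ b := by
    refine sum_congr rfl fun i hi => ?_
    rw [← rpow_mul (hp i hi), ← rpow_mul (hp i hi), ← rpow_add' (hp i hi), smul_eq_mul,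
      smul_eq_mul, mul_comm a, mul_comm b]
    exact (by positivity : 0 < x * a + y * b).ne'
  calc log (∑ i ∈ s, p i ^ (a • x + b • y))
      ≤ log ((∑ i ∈ s, p i ^ x) ^ a * (∑ i ∈ s, p i ^ y) ^ b) := by
        refine log_le_log (hsum_pos _) ?_
        rw [hsplit]
        exact sum_rpow_mul_rpow_le s (fun i hi => rpow_nonneg (hp i hi) x)
          (fun i hi => rpow_nonneg (hp i hi) y) ha hb hab
    _ = a • log (∑ i ∈ s, p i ^ x) + b • log (∑ i ∈ s, p i ^ y) := by
        rw [log_mul (rpow_pos_of_pos (hsum_pos x) a).ne' (rpow_pos_of_pos (hsum_pos y) b).ne',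
          log_rpow (hsum_pos x), log_rpow (hsum_pos y), smul_eq_mul, smul_eq_mul]

theorem ConvexOn.mul_comp_inv {f : ℝ → ℝ} (hf : ConvexOn ℝ (Set.Ioi 0) f) :
    ConvexOn ℝ (Set.Ioi 0) fun x => x * f x⁻¹ := by
  refine convexOn_iff_forall_pos.mpr ⟨convex_Ioi 0, fun x hx y hy a b ha hb hab => ?_⟩
  simp only [Set.mem_Ioi, smul_eq_mul] at hx hy ⊢
  set β := a * x + b * y
  have hβ : 0 < β := by positivity
  -- `1/β` is the convex combination of `1/x` and `1/y` with weights `a x / β` and `b y / β`.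
  have hweights : a * x / β + b * y / β = 1 := by rw [← add_div, div_self hβ.ne']
  have hinv : β⁻¹ = (a * x / β) * x⁻¹ + (b * y / β) * y⁻¹ := by field_simp; exact hab.symm
  calc β * f β⁻¹
      ≤ β * ((a * x / β) * f x⁻¹ + (b * y / β) * f y⁻¹) := by
        rw [hinv]
        gcongr
        exact hf.2 (inv_pos.mpr hx) (inv_pos.mpr hy) (by positivity) (by positivity) hweights
    _ = a * (x * f x⁻¹) + b * (y * f y⁻¹) := by field_simp

theorem G_convex_general (N : ℕ) (p : Fin N → ℝ)
    (hp : ∀ k, 0 ≤ p k) :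
    ConvexOn ℝ (Set.Ioi (0 : ℝ))
      (fun β : ℝ => β * Real.log (∑ k, p k ^ (1 + 1 / β))) := by
  have hF : ConvexOn ℝ (Set.Ioi (0 : ℝ)) fun s : ℝ => log (∑ k, p k ^ (1 + s)) :=
    ((convexOn_log_sum_rpow univ fun k _ => hp k).translate_right 1).subset
      (fun s (hs : 0 < s) => show 0 < 1 + s by linarith) (convex_Ioi 0)
  simpa only [one_div] using hF.mul_comp_inv

/-- G_β(p) = β log(∑ p_k^{1+1/β}) is convex in β on (0,∞). -/
theorem G_convex (N : ℕ) (hN : 1 ≤ N) (p : Fin N → ℝ)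
    (hp : ∀ k, 0 ≤ p k) (hsum : ∑ k, p k = 1) :
    ConvexOn ℝ (Set.Ioi (0 : ℝ))
      (fun β : ℝ => β * Real.log (∑ k, p k ^ (1 + 1 / β))) :=
  G_convex_general N p hp
end

section
/- The function β ↦ β · log(∑_{k=1}^N p_k^{1+1/β}) is non-increasing on (0,∞) for every probability vector p with positive entries; equivalently its derivative equals -∑_k q_k(β) · log(p_k^{1/β} / ∑_j p_j^{1+1/β}) where q_k(β) = p_k^{1+1/β}/∑_j p_j^{1+1/β}, and this derivative is ≤ 0. -/
open Real Finset

/-!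
Write `S = ∑ⱼ pⱼ^{1+1/β}` and `qₖ = pₖ^{1+1/β} / S` for the escort distribution of `p`.
Differentiating gives `G'(β) = log S - (∑ₖ qₖ log pₖ) / β = -∑ₖ qₖ log (pₖ^{1/β} / S)`.
Since `pₖ^{1/β} / S = qₖ / pₖ`, this is minus the Kullback–Leibler divergence of `q` from `p`,
which is nonnegative by Gibbs' inequality; the mean value theorem then gives monotonicity.
-/

theorem sum_mul_log_div_nonneg {ι : Type*} (s : Finset ι) {p q : ι → ℝ}
    (hp : ∀ i ∈ s, 0 < p i) (hq : ∀ i ∈ s, 0 < q i) (hpq : ∑ i ∈ s, p i ≤ ∑ i ∈ s, q i) :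
    0 ≤ ∑ i ∈ s, q i * log (q i / p i) := by
  have hterm : ∀ i ∈ s, q i - p i ≤ q i * log (q i / p i) := fun i hi => by
    have h := one_sub_inv_le_log_of_pos (div_pos (hq i hi) (hp i hi))
    rw [inv_div] at h
    have hmul := mul_le_mul_of_nonneg_left h (hq i hi).le
    rwa [mul_sub, mul_one, mul_div_cancel₀ _ (hq i hi).ne'] at hmul
  have := sum_le_sum hterm
  rw [sum_sub_distrib] at this
  linarith

theorem antitoneOn_of_hasDerivAt_nonpos {D : Set ℝ} (hD : Convex ℝ D) (hDo : IsOpen D)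
    {f f' : ℝ → ℝ} (hf : ∀ x ∈ D, HasDerivAt f (f' x) x) (hf' : ∀ x ∈ D, f' x ≤ 0) :
    AntitoneOn f D :=
  antitoneOn_of_hasDerivWithinAt_nonpos hD
    (fun x hx => (hf x hx).continuousAt.continuousWithinAt)
    (by rw [hDo.interior_eq]; exact fun x hx => (hf x hx).hasDerivWithinAt)
    (by rw [hDo.interior_eq]; exact hf')

theorem hasDerivAt_rpow_one_add_inv {a β : ℝ} (ha : 0 < a) (hβ : β ≠ 0) :
    HasDerivAt (fun b : ℝ => a ^ (1 + 1 / b)) (-(β ^ 2)⁻¹ * (a ^ (1 + 1 / β) * log a)) β := by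
  have hexp : HasDerivAt (fun b : ℝ => 1 + 1 / b) (-(β ^ 2)⁻¹) β := by
    simpa only [one_div, zero_add] using (hasDerivAt_inv hβ).const_add 1
  convert hexp.const_rpow ha using 1
  ring

variable {ι : Type*} [Fintype ι] {p : ι → ℝ} {β : ℝ}

theorem sum_rpow_pos [Nonempty ι] (hp : ∀ k, 0 < p k) (r : ℝ) : 0 < ∑ k, p k ^ r :=
  sum_pos (fun k _ => rpow_pos_of_pos (hp k) r) univ_nonempty

theorem sum_escort_mul_log_rpow_div_eq [Nonempty ι] (hp : ∀ k, 0 < p k) :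
    ∑ k, (p k ^ (1 + 1 / β) / ∑ j, p j ^ (1 + 1 / β)) *
        log (p k ^ (1 / β) / ∑ j, p j ^ (1 + 1 / β)) =
      (∑ k, p k ^ (1 + 1 / β) * log (p k)) / (β * ∑ k, p k ^ (1 + 1 / β)) -
        log (∑ k, p k ^ (1 + 1 / β)) := by
  have hS := (sum_rpow_pos hp (1 + 1 / β)).ne'
  have hlog : ∀ k, log (p k ^ (1 / β) / ∑ j, p j ^ (1 + 1 / β)) =
      log (p k) / β - log (∑ j, p j ^ (1 + 1 / β)) := fun k => by
    rw [log_div (rpow_pos_of_pos (hp k) _).ne' hS, log_rpow (hp k)]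
    ring
  simp_rw [hlog, mul_sub, sum_sub_distrib, ← sum_mul, ← sum_div, div_self hS, one_mul, sum_div]
  congr 1
  exact sum_congr rfl fun k _ => by field_simp

theorem hasDerivAt_mul_log_sum_rpow_one_add_inv [Nonempty ι] (hp : ∀ k, 0 < p k) (hβ : β ≠ 0) :
    HasDerivAt (fun b : ℝ => b * log (∑ k, p k ^ (1 + 1 / b)))
      (-(∑ k, (p k ^ (1 + 1 / β) / ∑ j, p j ^ (1 + 1 / β)) *
          log (p k ^ (1 / β) / ∑ j, p j ^ (1 + 1 / β)))) β := by
  have hsum := HasDerivAt.fun_sum fun k (_ : k ∈ univ) => hasDerivAt_rpow_one_add_inv (hp k) hβ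
  refine ((hasDerivAt_id' β).mul (hsum.log (sum_rpow_pos hp _).ne')).congr_deriv ?_
  rw [sum_escort_mul_log_rpow_div_eq hp, ← mul_sum]
  field_simp
  ring

theorem rpow_div_sum_eq_escort_div (hp : ∀ k, 0 < p k) (k : ι) :
    p k ^ (1 / β) / ∑ j, p j ^ (1 + 1 / β) =
      (p k ^ (1 + 1 / β) / ∑ j, p j ^ (1 + 1 / β)) / p k := by
  rw [rpow_add (hp k), rpow_one]
  field_simp [(hp k).ne']

theorem sum_escort_mul_log_rpow_div_nonneg [Nonempty ι] (hp : ∀ k, 0 < p k)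
    (hsum : ∑ k, p k ≤ 1) :
    0 ≤ ∑ k, (p k ^ (1 + 1 / β) / ∑ j, p j ^ (1 + 1 / β)) *
        log (p k ^ (1 / β) / ∑ j, p j ^ (1 + 1 / β)) := by
  have hS := sum_rpow_pos hp (1 + 1 / β)
  simp_rw [rpow_div_sum_eq_escort_div hp]
  refine sum_mul_log_div_nonneg univ (fun k _ => hp k)
    (fun k _ => div_pos (rpow_pos_of_pos (hp k) _) hS) ?_
  rwa [← sum_div, div_self hS.ne']

theorem G_antitone_deriv_general (N : ℕ) (p : Fin N → ℝ)
    (hp : ∀ k, 0 < p k) (hsum : ∑ k, p k = 1) :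
    AntitoneOn (fun β : ℝ => β * Real.log (∑ k, p k ^ (1 + 1 / β)))
      (Set.Ioi (0 : ℝ)) ∧
    ∀ β ∈ Set.Ioi (0 : ℝ),
      HasDerivAt (fun β : ℝ => β * Real.log (∑ k, p k ^ (1 + 1 / β)))
        (-(∑ k, (p k ^ (1 + 1 / β) / ∑ j, p j ^ (1 + 1 / β)) *
            Real.log (p k ^ (1 / β) / ∑ j, p j ^ (1 + 1 / β)))) β ∧
      (-(∑ k, (p k ^ (1 + 1 / β) / ∑ j, p j ^ (1 + 1 / β)) *
          Real.log (p k ^ (1 / β) / ∑ j, p j ^ (1 + 1 / β)))) ≤ 0 := by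
  have : Nonempty (Fin N) :=
    univ_nonempty_iff.mp (nonempty_of_sum_ne_zero (hsum ▸ one_ne_zero))
  have hderiv (β : ℝ) (hβ : 0 < β) := hasDerivAt_mul_log_sum_rpow_one_add_inv hp hβ.ne'
  have hnonpos (β : ℝ) := neg_nonpos.mpr (sum_escort_mul_log_rpow_div_nonneg (β := β) hp hsum.le)
  exact ⟨antitoneOn_of_hasDerivAt_nonpos (convex_Ioi 0) isOpen_Ioi hderiv fun β _ => hnonpos β,
    fun β hβ => ⟨hderiv β hβ, hnonpos β⟩⟩

/-- G_β is non-increasing on (0,∞); its derivative is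
    -∑_k q_k(β) log(p_k^{1/β}/∑_j p_j^{1+1/β}) ≤ 0. -/
theorem G_antitone_deriv (N : ℕ) (hN : 1 ≤ N) (p : Fin N → ℝ)
    (hp : ∀ k, 0 < p k) (hsum : ∑ k, p k = 1) :
    AntitoneOn (fun β : ℝ => β * Real.log (∑ k, p k ^ (1 + 1 / β)))
      (Set.Ioi (0 : ℝ)) ∧
    ∀ β ∈ Set.Ioi (0 : ℝ),
      HasDerivAt (fun β : ℝ => β * Real.log (∑ k, p k ^ (1 + 1 / β)))
        (-(∑ k, (p k ^ (1 + 1 / β) / ∑ j, p j ^ (1 + 1 / β)) *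
            Real.log (p k ^ (1 / β) / ∑ j, p j ^ (1 + 1 / β)))) β ∧
      (-(∑ k, (p k ^ (1 + 1 / β) / ∑ j, p j ^ (1 + 1 / β)) *
          Real.log (p k ^ (1 / β) / ∑ j, p j ^ (1 + 1 / β)))) ≤ 0 :=
  G_antitone_deriv_general N p hp hsum
end

section
/- The value of the second derivative of the Rényi entropy at α = 0 equals H''_0(p) = 2 log N + (1/N)∑_k (log p_k)^2 - (1/N²)(∑_k log p_k)² + (2/N)∑_k log p_k, and for the uniform distribution p_k = 1/N this equals 0. -/
open Real Filter Finset Topology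

/-!
Writing `p k ^ α = exp (α log p k)`, the Rényi entropy is `(1 - α)⁻¹ * ℓ α` with `ℓ` the
log-partition function `α ↦ log ∑ exp (α log p k)`. Its first two derivatives are the mean and the
variance of `log p` under the tilted weights `p k ^ α / ∑ p j ^ α`, which at `α = 0` are uniform.
Leibniz's rule with `((1 - α)⁻¹)' = (1 - α)⁻²` gives the second derivative
`2 (1 - α)⁻³ ℓ + 2 (1 - α)⁻² ℓ' + (1 - α)⁻¹ ℓ''`, a continuous function on `α < 1`, so its limit at
`0` is `2 log N + 2 · mean + variance`.
-/

section OneSubInvMul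

variable {ℓ ℓ' ℓ'' : ℝ → ℝ}

lemma hasDerivAt_one_sub_inv {α : ℝ} (hα : α ≠ 1) :
    HasDerivAt (fun a : ℝ => (1 - a)⁻¹) ((1 - α)⁻¹ ^ 2) α := by
  have h := ((hasDerivAt_id α).const_sub 1).inv (sub_ne_zero.mpr hα.symm)
  exact h.congr_deriv (by simp)

lemma hasDerivAt_one_sub_inv_mul (hℓ : ∀ a, HasDerivAt ℓ (ℓ' a) a) {α : ℝ} (hα : α ≠ 1) :
    HasDerivAt (fun a => (1 - a)⁻¹ * ℓ a) ((1 - α)⁻¹ ^ 2 * ℓ α + (1 - α)⁻¹ * ℓ' α) α :=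
  (hasDerivAt_one_sub_inv hα).mul (hℓ α)

lemma hasDerivAt_deriv_one_sub_inv_mul (hℓ : ∀ a, HasDerivAt ℓ (ℓ' a) a)
    (hℓ' : ∀ a, HasDerivAt ℓ' (ℓ'' a) a) {α : ℝ} (hα : α < 1) :
    HasDerivAt (deriv fun a => (1 - a)⁻¹ * ℓ a)
      (2 * (1 - α)⁻¹ ^ 3 * ℓ α + 2 * (1 - α)⁻¹ ^ 2 * ℓ' α + (1 - α)⁻¹ * ℓ'' α) α := by
  have hderiv : (deriv fun a => (1 - a)⁻¹ * ℓ a) =ᶠ[𝓝 α]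
      fun a => (1 - a)⁻¹ ^ 2 * ℓ a + (1 - a)⁻¹ * ℓ' a :=
    eventually_of_mem (Iio_mem_nhds hα) fun a ha =>
      (hasDerivAt_one_sub_inv_mul hℓ (ne_of_lt ha)).deriv
  have hg := hasDerivAt_one_sub_inv (ne_of_lt hα)
  refine (((hg.pow 2).mul (hℓ α)).add (hg.mul (hℓ' α))).congr_of_eventuallyEq hderiv
    |>.congr_deriv ?_
  simp only [Pi.pow_apply]
  ring

lemma tendsto_deriv_deriv_one_sub_inv_mul (hℓ : ∀ a, HasDerivAt ℓ (ℓ' a) a)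
    (hℓ' : ∀ a, HasDerivAt ℓ' (ℓ'' a) a) {x : ℝ} (hℓ'' : ContinuousAt ℓ'' x) (hx : x < 1) :
    Tendsto (deriv (deriv fun a => (1 - a)⁻¹ * ℓ a)) (𝓝 x)
      (𝓝 (2 * (1 - x)⁻¹ ^ 3 * ℓ x + 2 * (1 - x)⁻¹ ^ 2 * ℓ' x + (1 - x)⁻¹ * ℓ'' x)) := by
  have hg : ContinuousAt (fun a : ℝ => (1 - a)⁻¹) x :=
    (hasDerivAt_one_sub_inv (ne_of_lt hx)).continuousAt
  have hcont : ContinuousAt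
      (fun a => 2 * (1 - a)⁻¹ ^ 3 * ℓ a + 2 * (1 - a)⁻¹ ^ 2 * ℓ' a + (1 - a)⁻¹ * ℓ'' a) x :=
    (((continuousAt_const.mul (hg.pow 3)).mul (hℓ x).continuousAt).add
      ((continuousAt_const.mul (hg.pow 2)).mul (hℓ' x).continuousAt)).add (hg.mul hℓ'')
  refine hcont.tendsto.congr' ?_
  filter_upwards [Iio_mem_nhds hx] with a ha
  exact ((hasDerivAt_deriv_one_sub_inv_mul hℓ hℓ' ha).deriv).symm

end OneSubInvMul

section MomentSum

variable {ι : Type*} [Fintype ι] (L : ι → ℝ)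

/-- `momentSum L n` is the `n`-th derivative of the partition function `a ↦ ∑ i, exp (a * L i)`. -/
noncomputable def momentSum (n : ℕ) (a : ℝ) : ℝ := ∑ i, L i ^ n * exp (a * L i)

lemma hasDerivAt_momentSum (n : ℕ) (a : ℝ) :
    HasDerivAt (momentSum L n) (momentSum L (n + 1) a) a := by
  unfold momentSum
  refine HasDerivAt.fun_sum fun i _ => ?_
  have h := (((hasDerivAt_id a).mul_const (L i)).exp).const_mul (L i ^ n)
  exact h.congr_deriv (by simp only [id_eq]; ring)

lemma continuous_momentSum (n : ℕ) : Continuous (momentSum L n) := by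
  unfold momentSum
  fun_prop

lemma momentSum_zero_right (n : ℕ) : momentSum L n 0 = ∑ i, L i ^ n := by
  simp [momentSum]

variable [Nonempty ι]

lemma momentSum_zero_pos (a : ℝ) : 0 < momentSum L 0 a := by
  unfold momentSum
  exact sum_pos (fun i _ => by simp [exp_pos]) univ_nonempty

lemma continuous_momentSum_div_momentSum_zero (n : ℕ) :
    Continuous fun a => momentSum L n a / momentSum L 0 a :=
  (continuous_momentSum L n).div (continuous_momentSum L 0) fun a => (momentSum_zero_pos L a).ne'

lemma hasDerivAt_log_momentSum_zero (a : ℝ) :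
    HasDerivAt (fun a => log (momentSum L 0 a)) (momentSum L 1 a / momentSum L 0 a) a :=
  (hasDerivAt_momentSum L 0 a).log (momentSum_zero_pos L a).ne'

lemma hasDerivAt_momentSum_one_div_momentSum_zero (a : ℝ) :
    HasDerivAt (fun a => momentSum L 1 a / momentSum L 0 a)
      (momentSum L 2 a / momentSum L 0 a - (momentSum L 1 a / momentSum L 0 a) ^ 2) a := by
  have hS := (momentSum_zero_pos L a).ne'
  refine ((hasDerivAt_momentSum L 1 a).div (hasDerivAt_momentSum L 0 a) hS).congr_deriv ?_
  field_simp

end MomentSum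

lemma sum_rpow_eq_momentSum_zero {ι : Type*} [Fintype ι] {p : ι → ℝ} (hp : ∀ i, 0 < p i)
    (α : ℝ) : ∑ i, p i ^ α = momentSum (fun i => log (p i)) 0 α := by
  simp only [momentSum, pow_zero, one_mul]
  exact sum_congr rfl fun i _ => by rw [rpow_def_of_pos (hp i), mul_comm]

theorem renyi_second_deriv_at_zero_general (N : ℕ) (hN : 1 ≤ N) (p : Fin N → ℝ)
    (hp : ∀ k, 0 < p k) :
    Tendsto (deriv (deriv (fun α : ℝ => (1 / (1 - α)) * Real.log (∑ k, p k ^ α))))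
      (nhdsWithin 0 (Set.Ioi 0))
      (nhds (2 * Real.log N + (1 / N) * ∑ k, (Real.log (p k)) ^ 2
        - (1 / (N : ℝ) ^ 2) * (∑ k, Real.log (p k)) ^ 2
        + (2 / N) * ∑ k, Real.log (p k))) ∧
    ((∀ k, p k = 1 / N) →
      2 * Real.log N + (1 / N) * ∑ k, (Real.log (p k)) ^ 2
        - (1 / (N : ℝ) ^ 2) * (∑ k, Real.log (p k)) ^ 2
        + (2 / N) * ∑ k, Real.log (p k) = 0) := by
  have : Nonempty (Fin N) := Fin.pos_iff_nonempty.mp hN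
  have hN0 : (N : ℝ) ≠ 0 := Nat.cast_ne_zero.mpr (by omega)
  refine ⟨?_, fun huniform => ?_⟩
  · set L : Fin N → ℝ := fun k => log (p k)
    simp only [one_div, sum_rpow_eq_momentSum_zero hp]
    have h := tendsto_deriv_deriv_one_sub_inv_mul (hasDerivAt_log_momentSum_zero L)
      (hasDerivAt_momentSum_one_div_momentSum_zero L)
      ((continuous_momentSum_div_momentSum_zero L 2).sub
        ((continuous_momentSum_div_momentSum_zero L 1).pow 2)).continuousAt zero_lt_one
    convert h.mono_left nhdsWithin_le_nhds using 2
    simp only [momentSum_zero_right, pow_zero, sum_const, card_univ, Fintype.card_fin,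
      nsmul_eq_mul, mul_one, pow_one, sub_zero, inv_one, one_pow]
    field_simp
    ring
  · simp only [huniform, one_div, log_inv, sum_const, card_univ, Fintype.card_fin, nsmul_eq_mul]
    field_simp
    ring

/-- The continuous extension at α = 0 of the second derivative of the Rényi entropy
    equals 2 log N + (1/N)∑(log p_k)² − (1/N²)(∑ log p_k)² + (2/N)∑ log p_k,
    and this value is 0 for the uniform distribution. -/
theorem renyi_second_deriv_at_zero (N : ℕ) (hN : 1 ≤ N) (p : Fin N → ℝ)
    (hp : ∀ k, 0 < p k) (hsum : ∑ k, p k = 1) :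
    Tendsto (deriv (deriv (fun α : ℝ => (1 / (1 - α)) * Real.log (∑ k, p k ^ α))))
      (nhdsWithin 0 (Set.Ioi 0))
      (nhds (2 * Real.log N + (1 / N) * ∑ k, (Real.log (p k)) ^ 2
        - (1 / (N : ℝ) ^ 2) * (∑ k, Real.log (p k)) ^ 2
        + (2 / N) * ∑ k, Real.log (p k))) ∧
    ((∀ k, p k = 1 / N) →
      2 * Real.log N + (1 / N) * ∑ k, (Real.log (p k)) ^ 2
        - (1 / (N : ℝ) ^ 2) * (∑ k, Real.log (p k)) ^ 2
        + (2 / N) * ∑ k, Real.log (p k) = 0) :=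
  renyi_second_deriv_at_zero_general N hN p hp
end

section
/- Suppose the probability vector p takes only two distinct values p_0 and q_0 (with k entries equal to p_0 and N−k equal to q_0), satisfying p_0 − q_0 = (1/N)(log p_0 − log q_0) and k·p_0 + (N−k)·q_0 = 1, with 0 < p_0, q_0 < 1, p_0 ≠ q_0. Then the quantity H''_0(p) = 2 log N + (1/N)∑_k (log p_k)² − (1/N²)(∑_k log p_k)² + (2/N)∑_k log p_k equals log(N² p_0 q_0) − N² p_0 q_0 + 1, and is strictly negative. -/
/-!
Both sums over `p` are `k`-to-`(N - k)` weighted sums of `a = log p₀` and `b = log q₀`, and the two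
constraints turn the expression into `log x - x + 1` with `x = N² p₀ q₀`, which is negative unless
`x = 1`. With `u = N p₀`, `v = N q₀` the first constraint reads `log u - log v = u - v`; if moreover
`u v = 1`, then `s = log u` solves `sinh s = s`, so `s = 0` and `p₀ = q₀`.
-/

open Real Filter Finset

theorem Fin.sum_ite_val_lt {R : Type*} [CommRing R] {N k : ℕ} (hk : k ≤ N) (a b : R) :
    ∑ i : Fin N, (if (i : ℕ) < k then a else b) = k * a + ((N : R) - k) * b := by
  rw [Fin.sum_univ_eq_sum_range (fun i => if i < k then a else b), range_eq_Ico,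
    ← sum_Ico_consecutive _ (Nat.zero_le k) hk,
    sum_congr rfl fun i hi => if_pos (mem_Ico.mp hi).2,
    sum_congr rfl fun i hi => if_neg (Nat.not_lt.mpr (mem_Ico.mp hi).1)]
  simp [Nat.cast_sub hk]

theorem two_point_moment_identity {F : Type*} [Field F] {n k a b P Q : F} (hn : n ≠ 0)
    (hab : a - b = n * (P - Q)) (hPQ : k * P + (n - k) * Q = 1) :
    (1 / n) * (k * a ^ 2 + (n - k) * b ^ 2) - (1 / n ^ 2) * (k * a + (n - k) * b) ^ 2
      + (2 / n) * (k * a + (n - k) * b) = a + b - n ^ 2 * P * Q + 1 := by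
  field_simp
  linear_combination (k * (n - k) * ((a - b) + n * (P - Q)) + n * (2 * k - n)) * hab
    + (n ^ 2 * ((n - k) * P + k * Q + 1)) * hPQ

theorem Real.eq_of_log_sub_log_eq_sub_of_mul_eq_one {u v : ℝ} (hu : 0 < u)
    (hlog : log u - log v = u - v) (huv : u * v = 1) : u = v := by
  have hv : v = u⁻¹ := eq_inv_of_mul_eq_one_right huv
  have hsinh : sinh (log u) = log u := by
    rw [sinh_eq, exp_neg, exp_log hu]
    rw [hv, log_inv] at hlog
    linarith
  have hs : log u = 0 := by
    rcases lt_trichotomy (log u) 0 with h | h | h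
    · exact absurd hsinh (sinh_lt_self_iff.mpr h).ne
    · exact h
    · exact absurd hsinh (self_lt_sinh_iff.mpr h).ne'
  have hu1 : u = 1 := by rw [← exp_log hu, hs, exp_zero]
  rw [hv, hu1, inv_one]

theorem Hpp0_two_valued_neg_general (N k : ℕ) (hkN : k < N)
    (p₀ q₀ : ℝ) (hp₀ : p₀ ∈ Set.Ioo (0 : ℝ) 1) (hq₀ : q₀ ∈ Set.Ioo (0 : ℝ) 1)
    (hne : p₀ ≠ q₀)
    (hcond : p₀ - q₀ = (1 / N) * (Real.log p₀ - Real.log q₀))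
    (hsum : (k : ℝ) * p₀ + ((N : ℝ) - k) * q₀ = 1)
    (p : Fin N → ℝ) (hpdef : ∀ i, p i = if (i : ℕ) < k then p₀ else q₀) :
    2 * Real.log N + (1 / N) * ∑ i, (Real.log (p i)) ^ 2
      - (1 / (N : ℝ) ^ 2) * (∑ i, Real.log (p i)) ^ 2
      + (2 / N) * ∑ i, Real.log (p i)
      = Real.log ((N : ℝ) ^ 2 * p₀ * q₀) - (N : ℝ) ^ 2 * p₀ * q₀ + 1 ∧
    2 * Real.log N + (1 / N) * ∑ i, (Real.log (p i)) ^ 2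
      - (1 / (N : ℝ) ^ 2) * (∑ i, Real.log (p i)) ^ 2
      + (2 / N) * ∑ i, Real.log (p i) < 0 := by
  have hp0 := hp₀.1
  have hq0 := hq₀.1
  have hN : (N : ℝ) ≠ 0 := by exact_mod_cast (Nat.zero_le k).trans_lt hkN |>.ne'
  have hlog_sum : ∑ i, log (p i) = k * log p₀ + ((N : ℝ) - k) * log q₀ := by
    simp_rw [hpdef, apply_ite log]
    exact Fin.sum_ite_val_lt hkN.le _ _
  have hlog_sq_sum : ∑ i, log (p i) ^ 2 = k * log p₀ ^ 2 + ((N : ℝ) - k) * log q₀ ^ 2 := by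
    simp_rw [hpdef, apply_ite log, apply_ite (· ^ 2)]
    exact Fin.sum_ite_val_lt hkN.le _ _
  have hab : log p₀ - log q₀ = N * (p₀ - q₀) := by
    rw [hcond]
    field_simp
  have hlog_x : log ((N : ℝ) ^ 2 * p₀ * q₀) = 2 * log N + log p₀ + log q₀ := by
    rw [log_mul (by positivity) hq0.ne', log_mul (by positivity) hp0.ne', log_pow]
    push_cast
    ring
  have heq : 2 * log N + (1 / N) * ∑ i, log (p i) ^ 2 - (1 / (N : ℝ) ^ 2) * (∑ i, log (p i)) ^ 2
      + (2 / N) * ∑ i, log (p i) = log ((N : ℝ) ^ 2 * p₀ * q₀) - (N : ℝ) ^ 2 * p₀ * q₀ + 1 := by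
    rw [hlog_sum, hlog_sq_sum, hlog_x]
    linear_combination two_point_moment_identity hN hab hsum
  have hx : (N : ℝ) ^ 2 * p₀ * q₀ ≠ 1 := fun hx => hne <| mul_left_cancel₀ hN <|
    eq_of_log_sub_log_eq_sub_of_mul_eq_one (by positivity)
      (by rw [log_mul hN hp0.ne', log_mul hN hq0.ne']; linear_combination hab)
      (by linear_combination hx)
  refine ⟨heq, ?_⟩
  linarith [log_lt_sub_one_of_pos (by positivity) hx]

/-- For a two-valued probability vector satisfying the extremum conditions,
    H''_0(p) = log(N²p₀q₀) − N²p₀q₀ + 1 < 0. -/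
theorem Hpp0_two_valued_neg (N k : ℕ) (hk : 1 ≤ k) (hkN : k < N)
    (p₀ q₀ : ℝ) (hp₀ : p₀ ∈ Set.Ioo (0 : ℝ) 1) (hq₀ : q₀ ∈ Set.Ioo (0 : ℝ) 1)
    (hne : p₀ ≠ q₀)
    (hcond : p₀ - q₀ = (1 / N) * (Real.log p₀ - Real.log q₀))
    (hsum : (k : ℝ) * p₀ + ((N : ℝ) - k) * q₀ = 1)
    (p : Fin N → ℝ) (hpdef : ∀ i, p i = if (i : ℕ) < k then p₀ else q₀) :
    2 * Real.log N + (1 / N) * ∑ i, (Real.log (p i)) ^ 2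
      - (1 / (N : ℝ) ^ 2) * (∑ i, Real.log (p i)) ^ 2
      + (2 / N) * ∑ i, Real.log (p i)
      = Real.log ((N : ℝ) ^ 2 * p₀ * q₀) - (N : ℝ) ^ 2 * p₀ * q₀ + 1 ∧
    2 * Real.log N + (1 / N) * ∑ i, (Real.log (p i)) ^ 2
      - (1 / (N : ℝ) ^ 2) * (∑ i, Real.log (p i)) ^ 2
      + (2 / N) * ∑ i, Real.log (p i) < 0 :=
  Hpp0_two_valued_neg_general N k hkN p₀ q₀ hp₀ hq₀ hne hcond hsum p hpdef
end

section
/- If p_0, q_0 ∈ (0,1) are distinct, satisfy p_0 − q_0 = (1/N)(log p_0 − log q_0) and k·p_0 + (N−k)·q_0 = 1 for integers N > k ≥ 1, then N² p_0 q_0 ≠ 1. (Proof via the Lindemann–Weierstrass theorem: otherwise p_0, q_0 would be algebraic while log p_0 − log q_0 is transcendental.) -/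
open Real

/-!
Put `a = N p₀` and `b = N q₀`. If `N² p₀ q₀ = 1` then `b = a⁻¹`, and the condition on `p₀ - q₀`
becomes `a - a⁻¹ = log a - log a⁻¹`, that is `sinh (log a) = log a`. Since `sinh u - u` is
strictly increasing, `log a = 0`, so `a = b` and `p₀ = q₀`.
-/

theorem eq_of_mul_eq_one_of_sub_eq_log_sub_log {a b : ℝ} (ha : 0 < a) (hab : a * b = 1)
    (h : a - b = log a - log b) : a = b := by
  obtain rfl : b = a⁻¹ := eq_inv_of_mul_eq_one_right hab
  have hsinh : sinh (log a) = log a := by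
    rw [sinh_log ha]
    rw [log_inv] at h
    linarith
  have hlog : log a = 0 := sinh_sub_id_strictMono.injective (by simp [hsinh])
  rw [eq_one_of_pos_of_log_eq_zero ha hlog, inv_one]

theorem N_sq_p0_q0_ne_one_general (N : ℕ)
    (p₀ q₀ : ℝ) (hp₀ : p₀ ∈ Set.Ioo (0 : ℝ) 1) (hq₀ : q₀ ∈ Set.Ioo (0 : ℝ) 1)
    (hne : p₀ ≠ q₀)
    (hcond : p₀ - q₀ = (1 / N) * (Real.log p₀ - Real.log q₀)) :
    (N : ℝ) ^ 2 * p₀ * q₀ ≠ 1 := by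
  intro h
  have hN : (N : ℝ) ≠ 0 := by
    rintro hN
    simp [hN] at h
  have hlog : N * p₀ - N * q₀ = log (N * p₀) - log (N * q₀) := by
    rw [log_mul hN hp₀.1.ne', log_mul hN hq₀.1.ne', ← mul_sub, hcond]
    field_simp
    ring
  have hNpq := eq_of_mul_eq_one_of_sub_eq_log_sub_log
    (mul_pos ((Nat.cast_nonneg N).lt_of_ne' hN) hp₀.1) (by linear_combination h) hlog
  exact hne (mul_left_cancel₀ hN hNpq)

/-- Under the extremum conditions, N²p₀q₀ cannot equal 1. -/
theorem N_sq_p0_q0_ne_one (N k : ℕ) (hk : 1 ≤ k) (hkN : k < N)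
    (p₀ q₀ : ℝ) (hp₀ : p₀ ∈ Set.Ioo (0 : ℝ) 1) (hq₀ : q₀ ∈ Set.Ioo (0 : ℝ) 1)
    (hne : p₀ ≠ q₀)
    (hcond : p₀ - q₀ = (1 / N) * (Real.log p₀ - Real.log q₀))
    (hsum : (k : ℝ) * p₀ + ((N : ℝ) - k) * q₀ = 1) :
    (N : ℝ) ^ 2 * p₀ * q₀ ≠ 1 :=
  N_sq_p0_q0_ne_one_general N p₀ q₀ hp₀ hq₀ hne hcond
end

section
/- Let p be a fixed probability vector with p_k = 0 for k ≤ N_1 and p_k > 0 for k > N_1, and let p(ε) have entries p_k(ε) = c_k ε for k ≤ N_1 and p_k(ε) = p_k + c_k ε for k > N_1, with ∑ c_k = 0. If N_1 ≥ 1 and some c_k > 0 for k ≤ N_1 (with all c_k ∈ [0,1] for k ≤ N_1), then the Shannon entropies satisfy (H(p) − H(p(ε))) / (ε log ε) → ∑_{k=1}^{N_1} c_k as ε → 0+. -/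
open Real Filter Finset Topology

/-! The entropy difference splits over atoms. A zero atom contributes
`c ε log (c ε) = c ε log ε + O(ε)`, hence `c` after division by `ε log ε`; a positive atom
contributes `x log x` evaluated along a line through `p_k ≠ 0`, which is differentiable, so its
increment is `O(ε) = o(ε log ε)`. -/

lemma tendsto_inv_log_nhdsGT_zero : Tendsto (fun ε : ℝ => (log ε)⁻¹) (𝓝[>] 0) (𝓝 0) :=
  tendsto_inv_atBot_zero.comp tendsto_log_nhdsGT_zero

lemma tendsto_mul_log_mul_div_mul_log (c : ℝ) :
    Tendsto (fun ε : ℝ => c * ε * log (c * ε) / (ε * log ε)) (𝓝[>] 0) (𝓝 c) := by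
  have hlim : Tendsto (fun ε : ℝ => c * log c * (log ε)⁻¹ + c) (𝓝[>] 0) (𝓝 c) := by
    simpa using (tendsto_inv_log_nhdsGT_zero.const_mul (c * log c)).add_const c
  refine hlim.congr' ?_
  filter_upwards [Ioo_mem_nhdsGT (zero_lt_one' ℝ)] with ε ⟨hε0, hε1⟩
  have hlog : log ε ≠ 0 := (log_neg hε0 hε1).ne
  rcases eq_or_ne c 0 with rfl | hc
  · simp
  · rw [log_mul hc hε0.ne']
    field_simp

theorem HasDerivAt.tendsto_sub_div_mul_log {f : ℝ → ℝ} {f' : ℝ} (hf : HasDerivAt f f' 0) :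
    Tendsto (fun ε : ℝ => (f ε - f 0) / (ε * Real.log ε)) (𝓝[>] 0) (𝓝 0) := by
  have := hf.tendsto_slope_zero_right.mul tendsto_inv_log_nhdsGT_zero
  rw [mul_zero] at this
  refine this.congr fun ε => ?_
  simp only [zero_add, smul_eq_mul]
  rw [div_mul_eq_div_div, div_eq_mul_inv, div_eq_inv_mul]

lemma hasDerivAt_mul_log_add_mul {p : ℝ} (hp : p ≠ 0) (c : ℝ) :
    HasDerivAt (fun ε : ℝ => (p + c * ε) * log (p + c * ε)) ((log p + 1) * c) 0 := by
  have hlin : HasDerivAt (fun ε : ℝ => p + c * ε) c 0 := by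
    simpa using ((hasDerivAt_id (0 : ℝ)).const_mul c).const_add p
  simpa [Function.comp_def] using (hasDerivAt_mul_log (by simpa using hp)).comp (0 : ℝ) hlin

theorem shannon_perturb_zero_atoms_general (N N₁ : ℕ)
    (p : Fin N → ℝ)
    (hp0 : ∀ k : Fin N, (k : ℕ) < N₁ → p k = 0)
    (hppos : ∀ k : Fin N, N₁ ≤ (k : ℕ) → 0 < p k)
    (c : Fin N → ℝ) :
    Tendsto (fun ε : ℝ =>
        ((-∑ k, p k * Real.log (p k)) -
          (-∑ k : Fin N, (if (k : ℕ) < N₁ then c k * ε else p k + c k * ε) *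
              Real.log (if (k : ℕ) < N₁ then c k * ε else p k + c k * ε)))
          / (ε * Real.log ε))
      (nhdsWithin 0 (Set.Ioi 0))
      (nhds (∑ k ∈ Finset.univ.filter (fun k : Fin N => (k : ℕ) < N₁), c k)) := by
  set q : Fin N → ℝ → ℝ := fun k ε => if (k : ℕ) < N₁ then c k * ε else p k + c k * ε
  have hsplit : ∀ ε : ℝ,
      ((-∑ k, p k * log (p k)) - (-∑ k, q k ε * log (q k ε))) / (ε * log ε)
        = ∑ k, (q k ε * log (q k ε) - p k * log (p k)) / (ε * log ε) := fun ε => by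
    rw [← sum_div, sum_sub_distrib, neg_sub_neg]
  rw [sum_filter]
  refine (tendsto_finsetSum _ fun k _ => ?_).congr fun ε => (hsplit ε).symm
  by_cases hk : (k : ℕ) < N₁
  · simpa [q, hk, hp0 k hk] using tendsto_mul_log_mul_div_mul_log (c k)
  · have hpk : p k ≠ 0 := (hppos k (not_lt.mp hk)).ne'
    simpa [q, hk] using (hasDerivAt_mul_log_add_mul hpk (c k)).tendsto_sub_div_mul_log

/-- If some zero probability is perturbed (N₁ ≥ 1, some c_k > 0 for k ≤ N₁), then
    (H(p) − H(p(ε)))/(ε log ε) → ∑_{k ≤ N₁} c_k as ε → 0+. -/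
theorem shannon_perturb_zero_atoms (N N₁ : ℕ) (hN₁ : 1 ≤ N₁) (hN : N₁ < N)
    (p : Fin N → ℝ)
    (hp0 : ∀ k : Fin N, (k : ℕ) < N₁ → p k = 0)
    (hppos : ∀ k : Fin N, N₁ ≤ (k : ℕ) → 0 < p k)
    (hsum : ∑ k, p k = 1)
    (c : Fin N → ℝ)
    (hc1 : ∀ k : Fin N, (k : ℕ) < N₁ → c k ∈ Set.Icc (0 : ℝ) 1)
    (hc2 : ∀ k : Fin N, N₁ ≤ (k : ℕ) → |c k| ≤ 1)
    (hcsum : ∑ k, c k = 0)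
    (hcpos : ∃ k : Fin N, (k : ℕ) < N₁ ∧ 0 < c k) :
    Tendsto (fun ε : ℝ =>
        ((-∑ k, p k * Real.log (p k)) -
          (-∑ k : Fin N, (if (k : ℕ) < N₁ then c k * ε else p k + c k * ε) *
              Real.log (if (k : ℕ) < N₁ then c k * ε else p k + c k * ε)))
          / (ε * Real.log ε))
      (nhdsWithin 0 (Set.Ioi 0))
      (nhds (∑ k ∈ Finset.univ.filter (fun k : Fin N => (k : ℕ) < N₁), c k)) :=
  shannon_perturb_zero_atoms_general N N₁ p hp0 hppos c
end

section
/- Let 0 < α < 1, p a probability vector with zeros exactly at indices k ≤ N_1 (N_1 ≥ 1), and perturbed vector p(ε) with p_k(ε) = c_k ε for k ≤ N_1 (some c_k > 0) and p_k(ε) = p_k + c_k ε for k > N_1, ∑ c_k = 0. Then (H_α(p) − H_α(p(ε)))/ε^α → (1/(α−1)) · (∑_{k≤N_1} c_k^α) / (∑_{k>N_1} p_k^α) as ε → 0+. -/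
open Real Filter Finset

/-! For `ε > 0` the perturbed power sum splits as
`(∑_{k<N₁} c_k^α) ε^α + ∑_{k≥N₁} (p_k + c_k ε)^α`. The second sum is differentiable at `ε = 0`,
so it moves by `O(ε) = o(ε^α)` since `α < 1`. Hence the power sum is `S₀ + A ε^α + o(ε^α)` with
`A = ∑_{k<N₁} c_k^α` and `S₀ = ∑_{k≥N₁} p_k^α > 0`, and the first-order expansion of `log` at `S₀`
gives `log S(ε) - log S₀ = A ε^α / S₀ + o(ε^α)`. -/

open Asymptotics Topology

lemma isLittleO_id_rpow_nhdsGT_zero {α : ℝ} (hα : α < 1) :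
    (fun ε : ℝ => ε) =o[𝓝[>] 0] fun ε => ε ^ α := by
  have hdiv : Tendsto (fun ε : ℝ => ε ^ (1 - α)) (𝓝[>] 0) (𝓝 0) :=
    (tendsto_nhdsWithin_of_tendsto_nhds tendsto_id).rpow_const_nhds_zero (sub_pos.2 hα)
  refine (isLittleO_iff_tendsto' (eventually_mem_nhdsWithin.mono fun ε hε h0 =>
    absurd h0 (rpow_pos_of_pos hε α).ne')).2 (hdiv.congr' ?_)
  filter_upwards [self_mem_nhdsWithin] with ε (hε : 0 < ε)
  rw [rpow_sub hε, rpow_one]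

lemma HasDerivAt.sub_isLittleO_rpow {g : ℝ → ℝ} {g' α : ℝ} (hg : HasDerivAt g g' 0)
    (hα : α < 1) : (fun ε => g ε - g 0) =o[𝓝[>] 0] fun ε => ε ^ α := by
  have hO := hg.isBigO_sub.mono (nhdsWithin_le_nhds (s := Set.Ioi 0))
  simp only [sub_zero] at hO
  exact hO.trans_isLittleO (isLittleO_id_rpow_nhdsGT_zero hα)

lemma HasDerivAt.tendsto_sub_div_of_tendsto_sub_div {ι : Type*} {l : Filter ι}
    {g : ℝ → ℝ} {g' x A : ℝ} {S r : ι → ℝ} (hg : HasDerivAt g g' x)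
    (hS : Tendsto (fun t => (S t - x) / r t) l (𝓝 A)) (hr : Tendsto r l (𝓝 0))
    (hr0 : ∀ᶠ t in l, r t ≠ 0) :
    Tendsto (fun t => (g (S t) - g x) / r t) l (𝓝 (g' * A)) := by
  have hSr : (fun t => S t - x) =O[l] r :=
    isBigO_of_div_tendsto_nhds (hr0.mono fun t h h0 => absurd h0 h) A hS
  have hSx : Tendsto S l (𝓝 x) := tendsto_sub_nhds_zero_iff.1 (hSr.trans_tendsto hr)
  have hrem : (fun t => g (S t) - g x - (S t - x) * g') =o[l] r :=
    ((hasDerivAt_iff_isLittleO.1 hg).comp_tendsto hSx).trans_isBigO hSr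
  have hlim := hrem.tendsto_div_nhds_zero.add (hS.const_mul g')
  rw [zero_add] at hlim
  refine hlim.congr' (hr0.mono fun t ht => ?_)
  field_simp
  ring

section Perturbation

variable {ι : Type*} [Fintype ι] (P : ι → Prop) [DecidablePred P] (p c : ι → ℝ) {α : ℝ}

lemma sum_rpow_perturb_eq (hc : ∀ k, P k → 0 ≤ c k) {ε : ℝ} (hε : 0 ≤ ε) :
    ∑ k, (if P k then c k * ε else p k + c k * ε) ^ α =
      (∑ k ∈ univ.filter P, c k ^ α) * ε ^ α +
        ∑ k ∈ univ.filter (¬P ·), (p k + c k * ε) ^ α := by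
  rw [← sum_filter_add_sum_filter_not univ P, sum_mul]
  congr 1
  · refine sum_congr rfl fun k hk => ?_
    have hk : P k := (mem_filter.1 hk).2
    rw [if_pos hk, mul_rpow (hc k hk) hε]
  · exact sum_congr rfl fun k hk => by rw [if_neg (mem_filter.1 hk).2]

lemma sum_rpow_eq_sum_filter_not (hp : ∀ k, P k → p k = 0) (hα : α ≠ 0) :
    ∑ k, p k ^ α = ∑ k ∈ univ.filter (¬P ·), p k ^ α := by
  rw [← sum_filter_add_sum_filter_not univ P, add_eq_right]
  exact sum_eq_zero fun k hk => by rw [hp k (mem_filter.1 hk).2, zero_rpow hα]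

lemma tendsto_sum_rpow_perturb_sub_div (hc : ∀ k, P k → 0 ≤ c k) (hp : ∀ k, ¬P k → 0 < p k)
    (hα : α < 1) :
    Tendsto (fun ε => (∑ k, (if P k then c k * ε else p k + c k * ε) ^ α -
        ∑ k ∈ univ.filter (¬P ·), p k ^ α) / ε ^ α)
      (𝓝[>] 0) (𝓝 (∑ k ∈ univ.filter P, c k ^ α)) := by
  have hterm : ∀ k ∈ univ.filter (¬P ·),
      (fun ε => (p k + c k * ε) ^ α - p k ^ α) =o[𝓝[>] 0] fun ε => ε ^ α := by
    intro k hk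
    have hd : HasDerivAt (fun ε => (p k + c k * ε) ^ α) (α * p k ^ (α - 1) * c k) 0 := by
      have hlin : HasDerivAt (fun ε => p k + c k * ε) (c k) 0 := by
        simpa using ((hasDerivAt_id (0 : ℝ)).const_mul (c k)).const_add (p k)
      have hpow := hasDerivAt_rpow_const (p := α) (Or.inl (hp k (mem_filter.1 hk).2).ne')
      exact (by simpa using hpow : HasDerivAt (· ^ α) _ (p k + c k * 0)).comp 0 hlin
    simpa using hd.sub_isLittleO_rpow hα
  have hlim := (IsLittleO.fun_sum hterm).tendsto_div_nhds_zero.const_add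
    (∑ k ∈ univ.filter P, c k ^ α)
  rw [add_zero] at hlim
  refine hlim.congr' ?_
  filter_upwards [self_mem_nhdsWithin] with ε (hε : 0 < ε)
  rw [sum_rpow_perturb_eq P p c hc hε.le, sum_sub_distrib, add_sub_assoc, add_div,
    mul_div_cancel_right₀ _ (rpow_pos_of_pos hε α).ne']

end Perturbation

theorem renyi_perturb_lt_one_general (N N₁ : ℕ) (hN : N₁ < N)
    (α : ℝ) (hα : 0 < α) (hα1 : α < 1)
    (p : Fin N → ℝ)
    (hp0 : ∀ k : Fin N, (k : ℕ) < N₁ → p k = 0)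
    (hppos : ∀ k : Fin N, N₁ ≤ (k : ℕ) → 0 < p k)
    (c : Fin N → ℝ)
    (hc1 : ∀ k : Fin N, (k : ℕ) < N₁ → c k ∈ Set.Icc (0 : ℝ) 1) :
    Tendsto (fun ε : ℝ =>
        ((1 / (1 - α)) * Real.log (∑ k, p k ^ α) -
          (1 / (1 - α)) * Real.log
            (∑ k : Fin N, (if (k : ℕ) < N₁ then c k * ε else p k + c k * ε) ^ α))
          / ε ^ α)
      (nhdsWithin 0 (Set.Ioi 0))
      (nhds ((1 / (α - 1)) *
        (∑ k ∈ Finset.univ.filter (fun k : Fin N => (k : ℕ) < N₁), (c k) ^ α) /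
        (∑ k ∈ Finset.univ.filter (fun k : Fin N => N₁ ≤ (k : ℕ)), (p k) ^ α))) := by
  have hfilter : univ.filter (fun k : Fin N => N₁ ≤ (k : ℕ)) =
      univ.filter (fun k : Fin N => ¬(k : ℕ) < N₁) := by
    simp only [not_lt]
  rw [hfilter, sum_rpow_eq_sum_filter_not _ p hp0 hα.ne']
  have hS₀ : 0 < ∑ k ∈ univ.filter (fun k : Fin N => ¬(k : ℕ) < N₁), p k ^ α :=
    sum_pos (fun k hk => rpow_pos_of_pos (hppos k (not_lt.1 (mem_filter.1 hk).2)) α)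
      ⟨⟨N₁, hN⟩, by simp⟩
  have hlog := (hasDerivAt_log hS₀.ne').tendsto_sub_div_of_tendsto_sub_div
    (tendsto_sum_rpow_perturb_sub_div _ p c (fun k hk => (hc1 k hk).1)
      (fun k hk => hppos k (not_lt.1 hk)) hα1)
    ((tendsto_nhdsWithin_of_tendsto_nhds tendsto_id).rpow_const_nhds_zero hα)
    (eventually_mem_nhdsWithin.mono fun ε hε => (rpow_pos_of_pos hε α).ne')
  convert hlog.const_mul (1 / (α - 1)) using 2
  · rw [← mul_sub, ← neg_sub α, one_div_neg_eq_neg_one_div, neg_mul, ← mul_neg, neg_sub,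
      mul_div_assoc]
  · field_simp

/-- For 0 < α < 1, with zero atoms perturbed,
    (H_α(p) − H_α(p(ε)))/ε^α → (1/(α−1)) (∑_{k≤N₁} c_k^α)/(∑_{k>N₁} p_k^α). -/
theorem renyi_perturb_lt_one (N N₁ : ℕ) (hN₁ : 1 ≤ N₁) (hN : N₁ < N)
    (α : ℝ) (hα : 0 < α) (hα1 : α < 1)
    (p : Fin N → ℝ)
    (hp0 : ∀ k : Fin N, (k : ℕ) < N₁ → p k = 0)
    (hppos : ∀ k : Fin N, N₁ ≤ (k : ℕ) → 0 < p k)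
    (hsum : ∑ k, p k = 1)
    (c : Fin N → ℝ)
    (hc1 : ∀ k : Fin N, (k : ℕ) < N₁ → c k ∈ Set.Icc (0 : ℝ) 1)
    (hc2 : ∀ k : Fin N, N₁ ≤ (k : ℕ) → |c k| ≤ 1)
    (hcsum : ∑ k, c k = 0)
    (hcpos : ∃ k : Fin N, (k : ℕ) < N₁ ∧ 0 < c k) :
    Tendsto (fun ε : ℝ =>
        ((1 / (1 - α)) * Real.log (∑ k, p k ^ α) -
          (1 / (1 - α)) * Real.log
            (∑ k : Fin N, (if (k : ℕ) < N₁ then c k * ε else p k + c k * ε) ^ α))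
          / ε ^ α)
      (nhdsWithin 0 (Set.Ioi 0))
      (nhds ((1 / (α - 1)) *
        (∑ k ∈ Finset.univ.filter (fun k : Fin N => (k : ℕ) < N₁), (c k) ^ α) /
        (∑ k ∈ Finset.univ.filter (fun k : Fin N => N₁ ≤ (k : ℕ)), (p k) ^ α))) :=
  renyi_perturb_lt_one_general N N₁ hN α hα hα1 p hp0 hppos c hc1
end

section
/- For fixed λ > 0 and any α > 0, the Rényi entropy of the binomial distribution B(n, λ/n) converges, as n → ∞, to the Rényi entropy of the Poisson distribution with parameter λ; in particular for α ≠ 1, ∑_{k=0}^n (C(n,k)(λ/n)^k(1−λ/n)^{n−k})^α → ∑_{k=0}^∞ (e^{−λ} λ^k/k!)^α. -/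
open Real Filter Finset

/-- Probability mass function of the binomial distribution B(n, λ/n). -/
noncomputable def binomProb (lam : ℝ) (n k : ℕ) : ℝ :=
  (n.choose k : ℝ) * (lam / n) ^ k * (1 - lam / n) ^ (n - k)

/-- Probability mass function of the Poisson distribution with parameter λ. -/
noncomputable def poissonProb (lam : ℝ) (k : ℕ) : ℝ :=
  Real.exp (-lam) * lam ^ k / (Nat.factorial k)

/-!
Binomial probabilities converge pointwise to Poisson ones (the Poisson limit theorem), and once
`λ ≤ n` they are dominated by `λ^k / k!`. Since `(λ^k / k!)^α` is summable for every `α > 0`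
(the terms decay faster than any geometric sequence), dominated convergence for series gives the
convergence of `∑ p^α` and, through the bound `|p log p| ≤ 2 √p` on `[0, 1]`, of `∑ p log p`.
The Rényi entropies for `α ≠ 1` follow by continuity of `log` at the positive Poisson sum.
-/

open ProbabilityTheory Topology

lemma tendsto_sum_range_of_dominated {f : ℕ → ℕ → ℝ} {g bound : ℕ → ℝ}
    (hf : ∀ n k, n < k → f n k = 0) (h_lim : ∀ k, Tendsto (f · k) atTop (𝓝 (g k)))
    (h_sum : Summable bound) (h_bound : ∀ᶠ n in atTop, ∀ k, ‖f n k‖ ≤ bound k) :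
    Tendsto (fun n => ∑ k ∈ range (n + 1), f n k) atTop (𝓝 (∑' k, g k)) := by
  have h_tsum (n : ℕ) : ∑' k, f n k = ∑ k ∈ range (n + 1), f n k :=
    tsum_eq_sum fun k hk => hf n k (by simpa [Nat.lt_succ_iff] using hk)
  simpa only [h_tsum] using tendsto_tsum_of_dominated_convergence h_sum h_lim h_bound

lemma summable_pow_div_factorial_rpow {x α : ℝ} (hx : 0 ≤ x) (hα : 0 < α) :
    Summable fun k : ℕ => (x ^ k / k.factorial) ^ α := by
  have hr : (1 / 2 : ℝ) ^ α < 1 := rpow_lt_one (by norm_num) (by norm_num) hα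
  refine Summable.of_nonneg_of_le (fun k => by positivity) (fun k => ?_)
    ((summable_geometric_of_lt_one (by positivity) hr).mul_left (exp (2 * x) ^ α))
  have h_geom : x ^ k / k.factorial ≤ exp (2 * x) * (1 / 2) ^ k := by
    calc x ^ k / k.factorial = (2 * x) ^ k / k.factorial * (1 / 2) ^ k := by
          rw [mul_pow, mul_div_assoc, mul_right_comm, ← mul_pow]; norm_num
      _ ≤ exp (2 * x) * (1 / 2) ^ k := by
          gcongr; exact pow_div_factorial_le_exp _ (by positivity) k
  calc (x ^ k / k.factorial) ^ α ≤ (exp (2 * x) * (1 / 2) ^ k) ^ α :=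
        rpow_le_rpow (by positivity) h_geom hα.le
    _ = exp (2 * x) ^ α * ((1 / 2) ^ α) ^ k := by
        rw [mul_rpow (by positivity) (by positivity), rpow_pow_comm (by norm_num)]

lemma abs_mul_log_le_two_mul_sqrt {p : ℝ} (h0 : 0 ≤ p) (h1 : p ≤ 1) :
    |p * log p| ≤ 2 * √p := by
  rcases h0.eq_or_lt with rfl | hp
  · simp
  have h := abs_log_mul_self_rpow_lt p (1 / 2) hp h1 (by norm_num)
  rw [← sqrt_eq_rpow] at h
  calc |p * log p| = √p * |log p * √p| := by
        rw [abs_mul, abs_mul, abs_of_pos hp, abs_of_nonneg (sqrt_nonneg p)]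
        nth_rw 1 [← mul_self_sqrt h0]
        ring
    _ ≤ √p * 2 := by gcongr; simpa using h.le
    _ = 2 * √p := mul_comm _ _

lemma binomProb_tendsto_poissonProb (lam : ℝ) (k : ℕ) :
    Tendsto (fun n : ℕ => binomProb lam n k) atTop (𝓝 (poissonProb lam k)) := by
  have h_mean : Tendsto (fun n : ℕ => n * (lam / n)) atTop (𝓝 lam) := by
    refine tendsto_const_nhds.congr' ?_
    filter_upwards [eventually_ne_atTop 0] with n hn
    field_simp
  exact tendsto_choose_mul_pow_of_tendsto_mul_atTop k h_mean

section binomProb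

variable {lam : ℝ} {n : ℕ}

lemma binomProb_eq_zero_of_lt {k : ℕ} (hk : n < k) : binomProb lam n k = 0 := by
  simp [binomProb, Nat.choose_eq_zero_of_lt hk]

lemma sum_range_binomProb (lam : ℝ) (n : ℕ) : ∑ k ∈ range (n + 1), binomProb lam n k = 1 := by
  have h := (add_pow (lam / n) (1 - lam / n) n).symm
  rw [add_sub_cancel, one_pow] at h
  rw [← h]
  exact sum_congr rfl fun k _ => by rw [binomProb]; ring

variable (h0 : 0 ≤ lam) (hn : lam ≤ n)
include h0 hn

lemma binomProb_nonneg (k : ℕ) : 0 ≤ binomProb lam n k := by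
  have : 0 ≤ 1 - lam / n := sub_nonneg.2 (div_le_one_of_le₀ hn n.cast_nonneg)
  unfold binomProb
  positivity

lemma binomProb_le_one (k : ℕ) : binomProb lam n k ≤ 1 := by
  rcases le_or_gt k n with hk | hk
  · rw [← sum_range_binomProb lam n]
    exact single_le_sum (fun j _ => binomProb_nonneg h0 hn j) (mem_range.mpr (by omega))
  · rw [binomProb_eq_zero_of_lt hk]; exact zero_le_one

lemma binomProb_le_pow_div_factorial (k : ℕ) :
    binomProb lam n k ≤ lam ^ k / k.factorial := by
  have h_mean : n * (lam / n) ≤ lam := by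
    rcases eq_or_ne n 0 with rfl | hn0
    · simpa using h0
    · rw [mul_div_cancel₀ _ (by exact_mod_cast hn0)]
  have h_compl_nonneg : 0 ≤ 1 - lam / n := sub_nonneg.2 (div_le_one_of_le₀ hn n.cast_nonneg)
  have h_compl_le_one : 1 - lam / n ≤ 1 := sub_le_self _ (by positivity)
  calc binomProb lam n k ≤ (n : ℝ) ^ k / k.factorial * (lam / n) ^ k * 1 := by
        unfold binomProb
        gcongr
        · exact Nat.choose_le_pow_div k n
        · exact pow_le_one₀ h_compl_nonneg h_compl_le_one
    _ = (n * (lam / n)) ^ k / k.factorial := by ring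
    _ ≤ lam ^ k / k.factorial := by gcongr

end binomProb

lemma poissonProb_rpow_eq {lam : ℝ} (h0 : 0 ≤ lam) (α : ℝ) (k : ℕ) :
    poissonProb lam k ^ α = exp (-lam) ^ α * (lam ^ k / k.factorial) ^ α := by
  rw [poissonProb, mul_div_assoc, mul_rpow (exp_pos _).le (by positivity)]

lemma tsum_poissonProb_rpow_pos {lam α : ℝ} (h0 : 0 ≤ lam) (hα : 0 < α) :
    0 < ∑' k, poissonProb lam k ^ α := by
  simp_rw [poissonProb_rpow_eq h0]
  refine ((summable_pow_div_factorial_rpow h0 hα).mul_left _).tsum_pos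
    (fun k => by positivity) 0 ?_
  simp [rpow_pos_of_pos (exp_pos _)]

lemma eventually_forall_binomProb_bound {lam : ℝ} (h0 : 0 ≤ lam) :
    ∀ᶠ n : ℕ in atTop, ∀ k,
      0 ≤ binomProb lam n k ∧ binomProb lam n k ≤ 1 ∧
        binomProb lam n k ≤ lam ^ k / k.factorial := by
  filter_upwards [tendsto_natCast_atTop_atTop.eventually_ge_atTop lam] with n hn k
  exact ⟨binomProb_nonneg h0 hn k, binomProb_le_one h0 hn k,
    binomProb_le_pow_div_factorial h0 hn k⟩

lemma tendsto_sum_binomProb_rpow {lam α : ℝ} (h0 : 0 ≤ lam) (hα : 0 < α) :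
    Tendsto (fun n : ℕ => ∑ k ∈ range (n + 1), binomProb lam n k ^ α)
      atTop (𝓝 (∑' k, poissonProb lam k ^ α)) := by
  refine tendsto_sum_range_of_dominated (bound := fun k => (lam ^ k / k.factorial) ^ α)
    (fun n k hk => by rw [binomProb_eq_zero_of_lt hk, zero_rpow hα.ne'])
    (fun k => (binomProb_tendsto_poissonProb lam k).rpow_const (Or.inr hα.le))
    (summable_pow_div_factorial_rpow h0 hα) ?_
  filter_upwards [eventually_forall_binomProb_bound h0] with n hn k
  obtain ⟨h_nonneg, -, h_le⟩ := hn k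
  rw [norm_of_nonneg (by positivity)]
  exact rpow_le_rpow h_nonneg h_le hα.le

lemma tendsto_sum_binomProb_mul_log {lam : ℝ} (h0 : 0 ≤ lam) :
    Tendsto (fun n : ℕ => ∑ k ∈ range (n + 1), binomProb lam n k * log (binomProb lam n k))
      atTop (𝓝 (∑' k, poissonProb lam k * log (poissonProb lam k))) := by
  refine tendsto_sum_range_of_dominated (bound := fun k => 2 * √(lam ^ k / k.factorial))
    (fun n k hk => by simp [binomProb_eq_zero_of_lt hk])
    (fun k => (continuous_mul_log.tendsto _).comp (binomProb_tendsto_poissonProb lam k))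
    ?_ ?_
  · simpa only [sqrt_eq_rpow] using
      (summable_pow_div_factorial_rpow h0 one_half_pos).mul_left 2
  · filter_upwards [eventually_forall_binomProb_bound h0] with n hn k
    obtain ⟨h_nonneg, h_le_one, h_le⟩ := hn k
    calc ‖binomProb lam n k * log (binomProb lam n k)‖ ≤ 2 * √(binomProb lam n k) :=
          abs_mul_log_le_two_mul_sqrt h_nonneg h_le_one
      _ ≤ 2 * √(lam ^ k / k.factorial) := by gcongr

/-- The Rényi entropy of B(n, λ/n) converges to that of Poi(λ) for every α > 0;
    in particular for α ≠ 1 the sums ∑ (binomial pmf)^α converge to ∑ (Poisson pmf)^α. -/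
theorem renyi_binomial_tendsto_poisson (lam : ℝ) (hlam : 0 < lam)
    (α : ℝ) (hα : 0 < α) :
    (α = 1 →
      Tendsto (fun n : ℕ =>
          -∑ k ∈ Finset.range (n + 1),
              binomProb lam n k * Real.log (binomProb lam n k))
        atTop
        (nhds (-∑' k : ℕ, poissonProb lam k * Real.log (poissonProb lam k)))) ∧
    (α ≠ 1 →
      Tendsto (fun n : ℕ =>
          (1 / (1 - α)) * Real.log (∑ k ∈ Finset.range (n + 1), binomProb lam n k ^ α))
        atTop
        (nhds ((1 / (1 - α)) * Real.log (∑' k : ℕ, poissonProb lam k ^ α))) ∧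
      Tendsto (fun n : ℕ => ∑ k ∈ Finset.range (n + 1), binomProb lam n k ^ α)
        atTop (nhds (∑' k : ℕ, poissonProb lam k ^ α))) := by
  refine ⟨fun _ => (tendsto_sum_binomProb_mul_log hlam.le).neg, fun _ => ?_⟩
  have h_sum := tendsto_sum_binomProb_rpow hlam.le hα
  exact ⟨(h_sum.log (tsum_poissonProb_rpow_pos hlam.le hα).ne').const_mul _, h_sum⟩
end
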